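/- arXiv:1805.08817 — 3 statements merged into one kernel-verified Lean document; each statement's English description precedes it below -/
import Mathlib

section
/- Let u : ℝ^d → ℝ^d be a measurable vector field such that for almost every x ∈ ℝ^d and almost every y in the full ball B(x, δ₀) one has (u(x) − u(y)) · (x − y) = 0, where δ₀ > 0 is fixed. Then there exist a constant skew-symmetric matrix A and a constant vector b such that u(x) = A x + b for almost every x ∈ ℝ^d. -/
/-!
Near any point c, the points at which the hypothesis holds have positive measure, so they contain an
affine basis. For a.e. z near c the relations ⟪u y - u z, y - z⟫ = 0 hold for all y in that basis;
subtracting two of them cancels the quadratic term ⟪u z, z⟫ and leaves linear equations that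
determine u z as an affine function of z. Affine maps agreeing a.e. on a nonempty open set are
equal, so these local affine maps form a locally constant, hence constant, family: u agrees a.e.
with one affine map g. Feeding g back into the hypothesis gives ⟪g.linear v, v⟫ = 0 for small v,
hence for all v by homogeneity, and polarization makes the linear part skew-adjoint.
-/

open MeasureTheory Matrix
open scoped RealInnerProductSpace
open Metric Set Filter Topology

section InnerProductSpace

variable {E : Type*} [NormedAddCommGroup E] [InnerProductSpace ℝ E]

theorem exists_affineMap_of_inner_basis_eq {ι : Type*} (b : Module.Basis ι ℝ E) (a : ι → E)
    (κ : ι → ℝ) : ∃ g : E →ᵃ[ℝ] E, ∀ z w, (∀ i, ⟪b i, w⟫ = ⟪a i, z⟫ + κ i) → w = g z := by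
  let Φ : E →ₗ[ℝ] ι → ℝ := LinearMap.pi fun i => innerₛₗ ℝ (b i)
  have hΦ : LinearMap.ker Φ = ⊥ := LinearMap.ker_eq_bot'.2 fun w hw =>
    InnerProductSpace.ext_inner_left_basis b fun i => by simpa [Φ] using congrFun hw i
  obtain ⟨Ψ, hΨ⟩ := Φ.exists_leftInverse_of_injective hΦ
  let A : E →ₗ[ℝ] ι → ℝ := LinearMap.pi fun i => innerₛₗ ℝ (a i)
  refine ⟨(Ψ ∘ₗ A).toAffineMap + AffineMap.const ℝ E (Ψ κ), fun z w hzw => ?_⟩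
  have hΦw : Φ w = A z + κ := funext hzw
  calc w = Ψ (Φ w) := (LinearMap.congr_fun hΨ w).symm
    _ = _ := by simp [hΦw]

theorem exists_affineMap_of_inner_sub_eq_zero {ι : Type*} (p : AffineBasis ι ℝ E) (q : ι → E) :
    ∃ g : E →ᵃ[ℝ] E, ∀ z w, (∀ i, ⟪q i - w, p i - z⟫ = 0) → w = g z := by
  obtain ⟨i₀⟩ := p.nonempty
  obtain ⟨g, hg⟩ := exists_affineMap_of_inner_basis_eq (p.basisOf i₀) (fun j => q i₀ - q j)
    (fun j => ⟪q j, p j⟫ - ⟪q i₀, p i₀⟫)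
  refine ⟨g, fun z w hzw => hg z w fun j => ?_⟩
  have hj := hzw j
  have hi₀ := hzw i₀
  rw [p.basisOf_apply, vsub_eq_sub]
  simp only [inner_sub_left, inner_sub_right, real_inner_comm] at hj hi₀ ⊢
  linarith

theorem LinearMap.adjoint_eq_neg_of_inner_map_self_eq_zero [FiniteDimensional ℝ E]
    (L : E →ₗ[ℝ] E) (h : ∀ v, ⟪L v, v⟫ = 0) : L.adjoint = -L := by
  refine ((LinearMap.eq_adjoint_iff _ _).2 fun x y => ?_).symm
  have hxy := h (x + y)
  simp only [map_add, inner_add_left, inner_add_right, h x, h y] at hxy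
  rw [LinearMap.neg_apply, inner_neg_left, real_inner_comm (L y) x]
  linarith

theorem LinearMap.inner_map_self_eq_zero_of_eventually (L : E →ₗ[ℝ] E)
    (h : ∀ᶠ v in 𝓝 0, ⟪L v, v⟫ = 0) (v : E) : ⟪L v, v⟫ = 0 := by
  have hsmul : Tendsto (fun t : ℝ => t • v) (𝓝 0) (𝓝 0) :=
    (continuous_id.smul continuous_const).tendsto' 0 0 (zero_smul ℝ v)
  obtain ⟨t, htv, ht⟩ := ((hsmul.mono_left nhdsWithin_le_nhds).eventually h).and
    (self_mem_nhdsWithin (s := {0}ᶜ)) |>.exists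
  simp only [map_smul, real_inner_smul_left, real_inner_smul_right] at htv
  simpa [show t ≠ 0 from ht] using htv

end InnerProductSpace

theorem Matrix.transpose_eq_neg_of_inner_toEuclideanLin_self {n : Type*} [Fintype n]
    [DecidableEq n] (A : Matrix n n ℝ) (h : ∀ v, ⟪toEuclideanLin A v, v⟫ = 0) : Aᵀ = -A := by
  apply toEuclideanLin.injective
  rw [← conjTranspose_eq_transpose_of_trivial, toEuclideanLin_conjTranspose_eq_adjoint,
    LinearMap.adjoint_eq_neg_of_inner_map_self_eq_zero _ h, map_neg]

theorem MeasureTheory.ae_of_forall_exists_mem_nhds {α : Type*} [TopologicalSpace α]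
    [SecondCountableTopology α] [MeasurableSpace α] {μ : Measure α} {p : α → Prop}
    (h : ∀ x, ∃ U ∈ 𝓝 x, ∀ᵐ z ∂μ, z ∈ U → p z) : ∀ᵐ z ∂μ, p z := by
  refine measure_null_of_locally_null _ fun x _ => ?_
  obtain ⟨U, hU, hpU⟩ := h x
  refine ⟨{z | ¬p z} ∩ U, inter_mem_nhdsWithin _ hU, measure_mono_null ?_ (ae_iff.1 hpU)⟩
  exact fun z hz hpz => hz.1 (hpz hz.2)

section NormedSpace

variable {E F : Type*} [NormedAddCommGroup E] [NormedSpace ℝ E] [FiniteDimensional ℝ E]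
  [MeasurableSpace E] [BorelSpace E]

theorem affineSpan_eq_top_of_measure_ne_zero (μ : Measure E) [μ.IsAddHaarMeasure] {s : Set E}
    (hs : μ s ≠ 0) : affineSpan ℝ s = ⊤ := by
  by_contra hspan
  exact hs (measure_mono_null (subset_affineSpan ℝ s) (Measure.addHaar_affineSubspace μ _ hspan))

theorem AffineMap.eq_of_ae_eq_on_isOpen [NormedAddCommGroup F] [NormedSpace ℝ F]
    {μ : Measure E} [μ.IsOpenPosMeasure] {g g' : E →ᵃ[ℝ] F} {U : Set E} (hU : IsOpen U)
    (hne : U.Nonempty) (h : ∀ᵐ z ∂μ, z ∈ U → g z = g' z) : g = g' :=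
  AffineMap.ext_on (hU.affineSpan_eq_top hne) <|
    Measure.eqOn_open_of_ae_eq ((ae_restrict_iff' hU.measurableSet).2 h) hU
      g.continuous_of_finiteDimensional.continuousOn g'.continuous_of_finiteDimensional.continuousOn

end NormedSpace

section HaarMeasure

variable {E : Type*} [NormedAddCommGroup E] [InnerProductSpace ℝ E] [FiniteDimensional ℝ E]
  [MeasurableSpace E] [BorelSpace E] {μ : Measure E} {u : E → E} {δ : ℝ}

theorem AffineMap.inner_linear_self_eq_zero_of_ae [μ.IsOpenPosMeasure] (g : E →ᵃ[ℝ] E) {x : E}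
    (hδ : 0 < δ) (h : ∀ᵐ y ∂μ, y ∈ ball x δ → ⟪g x - g y, x - y⟫ = 0) (v : E) :
    ⟪g.linear v, v⟫ = 0 := by
  have hg := g.continuous_of_finiteDimensional
  have hball : EqOn (fun y => ⟪g x - g y, x - y⟫) 0 (ball x δ) :=
    Measure.eqOn_open_of_ae_eq ((ae_restrict_iff' measurableSet_ball).2 h) isOpen_ball
      (by fun_prop) continuousOn_const
  refine g.linear.inner_map_self_eq_zero_of_eventually ?_ v
  filter_upwards [ball_mem_nhds 0 hδ] with w hw
  have : ⟪g x - g (x - w), x - (x - w)⟫ = 0 := hball (show x - w ∈ ball x δ by simpa using hw)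
  rwa [← vsub_eq_sub (g x), ← g.linearMap_vsub, vsub_eq_sub, sub_sub_cancel] at this

variable [μ.IsAddHaarMeasure]

theorem exists_affineMap_ae_eq_on_ball (hδ : 0 < δ)
    (h : ∀ᵐ x ∂μ, ∀ᵐ y ∂μ, y ∈ ball x δ → ⟪u x - u y, x - y⟫ = 0) (c : E) :
    ∃ g : E →ᵃ[ℝ] E, ∀ᵐ z ∂μ, z ∈ ball c (δ / 2) → u z = g z := by
  set Ω := {x | ∀ᵐ y ∂μ, y ∈ ball x δ → ⟪u x - u y, x - y⟫ = 0}
  have hs : μ (Ω ∩ ball c (δ / 2)) ≠ 0 := by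
    rw [inter_comm, measure_inter_conull h]
    exact (measure_ball_pos μ c (half_pos hδ)).ne'
  obtain ⟨t, hts, p, hp⟩ :=
    AffineBasis.exists_affine_subbasis (affineSpan_eq_top_of_measure_ne_zero μ hs)
  have : Finite t := finite_of_fin_dim_affineIndependent ℝ p.ind
  obtain ⟨g, hg⟩ := exists_affineMap_of_inner_sub_eq_zero p (fun i => u (p i))
  have hrel (i : t) : ∀ᵐ z ∂μ, z ∈ ball c (δ / 2) → ⟪u (p i) - u z, p i - z⟫ = 0 := by
    have hpi : p i ∈ Ω ∩ ball c (δ / 2) := by rw [hp]; exact hts i.2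
    filter_upwards [hpi.1] with z hz hzc
    refine hz ?_
    calc dist z (p i) ≤ dist z c + dist (p i) c := dist_triangle_right _ _ _
      _ < δ / 2 + δ / 2 := add_lt_add hzc hpi.2
      _ = δ := add_halves δ
  refine ⟨g, ?_⟩
  filter_upwards [ae_all_iff.2 hrel] with z hz hzc
  exact hg z (u z) fun i => hz i hzc

theorem exists_affineMap_ae_eq (hδ : 0 < δ)
    (h : ∀ᵐ x ∂μ, ∀ᵐ y ∂μ, y ∈ ball x δ → ⟪u x - u y, x - y⟫ = 0) :
    ∃ g : E →ᵃ[ℝ] E, ∀ᵐ z ∂μ, u z = g z := by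
  choose G hG using exists_affineMap_ae_eq_on_ball hδ h
  have hG_const : IsLocallyConstant G := (IsLocallyConstant.iff_eventually_eq G).2 fun c => by
    filter_upwards [ball_mem_nhds c (half_pos hδ)] with c' hc'
    refine AffineMap.eq_of_ae_eq_on_isOpen (μ := μ) (isOpen_ball.inter isOpen_ball)
      ⟨c', mem_ball_self (half_pos hδ), hc'⟩ ?_
    filter_upwards [hG c', hG c] with z h₁ h₂ hz
    rw [← h₁ hz.1, ← h₂ hz.2]
  refine ⟨G 0, ae_of_forall_exists_mem_nhds fun c =>
    ⟨ball c (δ / 2), ball_mem_nhds c (half_pos hδ), ?_⟩⟩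
  rw [hG_const.apply_eq_of_preconnectedSpace 0 c]
  exact hG c

end HaarMeasure

theorem stmt3_general (d : ℕ) (δ₀ : ℝ) (hδ₀ : 0 < δ₀)
    (u : EuclideanSpace ℝ (Fin d) → EuclideanSpace ℝ (Fin d))
    (h : ∀ᵐ x : EuclideanSpace ℝ (Fin d),
      ∀ᵐ y : EuclideanSpace ℝ (Fin d),
        y ∈ Metric.ball x δ₀ → ⟪u x - u y, x - y⟫ = 0) :
    ∃ (A : Matrix (Fin d) (Fin d) ℝ) (b : EuclideanSpace ℝ (Fin d)),
      Aᵀ = -A ∧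
      ∀ᵐ x : EuclideanSpace ℝ (Fin d),
        u x = (EuclideanSpace.equiv (Fin d) ℝ).symm (A.mulVec x) + b := by
  obtain ⟨g, hg⟩ := exists_affineMap_ae_eq hδ₀ h
  obtain ⟨x, hgx, hx⟩ := (hg.and h).exists
  have hskew : ∀ v, ⟪g.linear v, v⟫ = 0 := g.inner_linear_self_eq_zero_of_ae hδ₀ <| by
    filter_upwards [hx, hg] with y hy hgy
    rwa [← hgx, ← hgy]
  set A := toEuclideanLin.symm g.linear
  have hA : toEuclideanLin A = g.linear := toEuclideanLin.apply_symm_apply _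
  refine ⟨A, g 0, A.transpose_eq_neg_of_inner_toEuclideanLin_self (hA ▸ hskew), ?_⟩
  filter_upwards [hg] with z hz
  have hgz : g z = toEuclideanLin A z + g 0 := by rw [hA]; exact congrFun g.decomp z
  exact hz.trans hgz

/-- A measurable vector field whose projected differences vanish a.e. locally
is a.e. an affine map with skew-symmetric linear part. -/
theorem stmt3 (d : ℕ) (δ₀ : ℝ) (hδ₀ : 0 < δ₀)
    (u : EuclideanSpace ℝ (Fin d) → EuclideanSpace ℝ (Fin d)) (hu : Measurable u)
    (h : ∀ᵐ x : EuclideanSpace ℝ (Fin d),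
      ∀ᵐ y : EuclideanSpace ℝ (Fin d),
        y ∈ Metric.ball x δ₀ → ⟪u x - u y, x - y⟫ = 0) :
    ∃ (A : Matrix (Fin d) (Fin d) ℝ) (b : EuclideanSpace ℝ (Fin d)),
      Aᵀ = -A ∧
      ∀ᵐ x : EuclideanSpace ℝ (Fin d),
        u x = (EuclideanSpace.equiv (Fin d) ℝ).symm (A.mulVec x) + b :=
  stmt3_general d δ₀ hδ₀ u h
end

section
/- Let u : ℝ^d → ℝ^d be continuously differentiable on a connected open set Ω, and suppose (u(x) − u(y)) · (x − y) = 0 for all x, y ∈ Ω with |x − y| < δ₀ for some δ₀ > 0. Then the symmetric part of the gradient of u vanishes on Ω, i.e. ∇u(x) + ∇u(x)ᵀ = 0 for all x ∈ Ω. -/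
/-!
Fix `x ∈ Ω` and a direction `v`. Along the line `t ↦ x + t • v` the hypothesis reads
`t * ⟪u (x + t • v) - u x, v⟫ = 0`, so `φ t = ⟪u (x + t • v) - u x, v⟫` vanishes near `0` and its
derivative `⟪Du(x) v, v⟫` at `0` is zero. A linear map whose quadratic form vanishes is
skew-symmetric, by polarization.
-/

open Filter Topology
open scoped RealInnerProductSpace

variable {E : Type*} [NormedAddCommGroup E] [InnerProductSpace ℝ E]

theorem LinearMap.inner_map_add_inner_map_swap_eq_zero {A : E →ₗ[ℝ] E}
    (hA : ∀ v, ⟪A v, v⟫ = 0) (v w : E) : ⟪A v, w⟫ + ⟪A w, v⟫ = 0 := by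
  have hvw := hA (v + w)
  rw [map_add, inner_add_left, inner_add_right, inner_add_right, hA v, hA w] at hvw
  linarith

theorem HasFDerivAt.inner_apply_self_eq_zero {u : E → E} {A : E →L[ℝ] E} {x : E}
    (hu : HasFDerivAt u A x) (h : ∀ᶠ y in 𝓝 x, ⟪u y - u x, y - x⟫ = 0) (v : E) :
    ⟪A v, v⟫ = 0 := by
  have hline : HasDerivAt (fun t : ℝ => x + t • v) v 0 := by
    simpa using ((hasDerivAt_id (0 : ℝ)).smul_const v).const_add x
  have hφ : HasDerivAt (fun t : ℝ => ⟪u (x + t • v) - u x, v⟫) ⟪A v, v⟫ 0 := by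
    have hu0 : HasFDerivAt u A (x + (0 : ℝ) • v) := by simpa using hu
    have hcomp := (hu0.comp_hasDerivAt 0 hline).sub_const (u x)
    simpa using hcomp.inner ℝ (hasDerivAt_const 0 v)
  have hline_tendsto : Tendsto (fun t : ℝ => x + t • v) (𝓝 0) (𝓝 x) := by
    simpa using hline.continuousAt.tendsto
  have hφ_zero : (fun t : ℝ => ⟪u (x + t • v) - u x, v⟫) =ᶠ[𝓝 0] fun _ => 0 := by
    filter_upwards [hline_tendsto.eventually h] with t ht
    rw [add_sub_cancel_left, real_inner_smul_right] at ht
    rcases mul_eq_zero.mp ht with rfl | ht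
    · simp
    · exact ht
  exact hφ.unique ((hasDerivAt_const 0 (0 : ℝ)).congr_of_eventuallyEq hφ_zero)

theorem stmt4_general (d : ℕ) (Ω : Set (EuclideanSpace ℝ (Fin d))) (hΩ : IsOpen Ω)
    (δ₀ : ℝ) (hδ₀ : 0 < δ₀)
    (u : EuclideanSpace ℝ (Fin d) → EuclideanSpace ℝ (Fin d))
    (hu : ContDiffOn ℝ 1 u Ω)
    (h : ∀ x ∈ Ω, ∀ y ∈ Ω, dist x y < δ₀ → ⟪u x - u y, x - y⟫ = 0) :
    ∀ x ∈ Ω, ∀ v w : EuclideanSpace ℝ (Fin d),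
      ⟪fderiv ℝ u x v, w⟫ + ⟪fderiv ℝ u x w, v⟫ = 0 := by
  intro x hx
  have hux : HasFDerivAt u (fderiv ℝ u x) x :=
    ((hu.differentiableOn one_ne_zero).differentiableAt (hΩ.mem_nhds hx)).hasFDerivAt
  have hlocal : ∀ᶠ y in 𝓝 x, ⟪u y - u x, y - x⟫ = 0 := by
    filter_upwards [hΩ.mem_nhds hx, Metric.ball_mem_nhds x hδ₀] with y hy hyx
    exact h y hy x hx hyx
  exact LinearMap.inner_map_add_inner_map_swap_eq_zero (A := (fderiv ℝ u x).toLinearMap)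
    (hux.inner_apply_self_eq_zero hlocal)

/-- If u is C¹ on a connected open set Ω and its projected differences vanish locally,
then the symmetric part of the gradient of u vanishes on Ω. -/
theorem stmt4 (d : ℕ) (Ω : Set (EuclideanSpace ℝ (Fin d))) (hΩ : IsOpen Ω)
    (hconn : IsConnected Ω) (δ₀ : ℝ) (hδ₀ : 0 < δ₀)
    (u : EuclideanSpace ℝ (Fin d) → EuclideanSpace ℝ (Fin d))
    (hu : ContDiffOn ℝ 1 u Ω)
    (h : ∀ x ∈ Ω, ∀ y ∈ Ω, dist x y < δ₀ → ⟪u x - u y, x - y⟫ = 0) :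
    ∀ x ∈ Ω, ∀ v w : EuclideanSpace ℝ (Fin d),
      ⟪fderiv ℝ u x v, w⟫ + ⟪fderiv ℝ u x w, v⟫ = 0 :=
  stmt4_general d Ω hΩ δ₀ hδ₀ u hu h
end

section
/- Let Ω ⊂ ℝ^d be open and bounded, s ∈ (0,1), ρ(ξ) = |ξ|^{−d−2s+2} 1_{Λ ∩ B_1}(ξ) for a double cone Λ with apex at 0. Then there exists C_P > 0 such that for all u ∈ L²(ℝ^d; ℝ^d) vanishing a.e. outside Ω, ‖u‖²_{L²} ≤ C_P ∬_{ℝ^d×ℝ^d} ρ(x−y) ((u(x)−u(y))·(x−y)/|x−y|)² / |x−y|² · |x−y|² dy dx, i.e. the Poincaré–Korn inequality ‖u‖²_{L²} ≤ C_P ∬ k(x−y) |D(u)(x,y)|² dy dx holds with k(ξ) = |ξ|^{−d−2s} 1_{Λ∩B_1}(ξ). -/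
/-!
Pick a small ball `U` of directions inside `Λ ∩ B₁`, bounded away from `0`, on which `k ≥ 1`.
For each direction `h ∈ U`, translating by `-h` about `N ≈ diam Ω / |h|` times carries `Ω` off
itself, so telescoping and Cauchy–Schwarz bound `∫ ⟪u x, h/|h|⟫²` by `N²` times the integral of
the squared projected difference `⟪u x - u (x - h), h/|h|⟫²`. Averaging over `h ∈ U` recovers
`‖u x‖²` up to a constant, since `w ↦ ∫_U ⟪w, h/|h|⟫² dh` is a positive definite quadratic form:
it vanishes only where `U` lies in the hyperplane `w^⊥`, which is null.
-/

open MeasureTheory Metric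
open scoped RealInnerProductSpace ENNReal

theorem sq_le_mul_sum_sq_sub_of_eq_zero (F : ℕ → ℝ) {N : ℕ} (hN : F N = 0) :
    F 0 ^ 2 ≤ N * ∑ j ∈ Finset.range N, (F j - F (j + 1)) ^ 2 := by
  have h := sq_sum_le_card_mul_sum_sq (s := Finset.range N) (f := fun j => F j - F (j + 1))
  rwa [Finset.sum_range_sub', hN, sub_zero, Finset.card_range] at h

theorem Bornology.IsBounded.exists_add_notMem {E : Type*} [SeminormedAddCommGroup E]
    {Ω : Set E} (hΩ : Bornology.IsBounded Ω) :
    ∃ R, ∀ a : E, R < ‖a‖ → ∀ x ∈ Ω, x + a ∉ Ω := by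
  obtain ⟨R, hR⟩ := Metric.isBounded_iff.mp hΩ
  refine ⟨R, fun a ha x hx hxa => ha.not_ge ?_⟩
  simpa [dist_eq_norm] using hR hxa hx

theorem exists_ball_subset_inter_unitBall_of_smul_mem {E : Type*} [NormedAddCommGroup E]
    [NormedSpace ℝ E] {Λ : Set E} (hΛ : IsOpen Λ) (hΛne : Λ.Nonempty) (hΛ0 : (0 : E) ∉ Λ)
    (hΛscale : ∀ t : ℝ, 0 < t → ∀ h ∈ Λ, t • h ∈ Λ) :
    ∃ e : E, ∃ ε > 0, ε < ‖e‖ ∧ ball e ε ⊆ Λ ∩ ball 0 1 := by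
  obtain ⟨x, hx⟩ := hΛne
  have hx0 : 0 < ‖x‖ := norm_pos_iff.2 fun h => hΛ0 (h ▸ hx)
  set e : E := (2 * ‖x‖)⁻¹ • x
  have he : ‖e‖ = 1 / 2 := by
    rw [norm_smul, norm_inv, Real.norm_of_nonneg (by positivity)]
    field_simp
  obtain ⟨ε, hε, hεΛ⟩ := Metric.isOpen_iff.1 hΛ e (hΛscale _ (by positivity) x hx)
  refine ⟨e, min ε (1 / 4), by positivity, by rw [he]; linarith [min_le_right ε (1 / 4)],
    Set.subset_inter ((ball_subset_ball (min_le_left _ _)).trans hεΛ) (ball_subset_ball' ?_)⟩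
  rw [dist_zero_right, he]
  linarith [min_le_right ε (1 / 4)]

theorem lintegral_lintegral_congr_ae {α β : Type*} [MeasurableSpace α] {μ : Measure α}
    {u v : α → β} (huv : u =ᵐ[μ] v) (F : α → α → β → β → ℝ≥0∞) :
    ∫⁻ x, ∫⁻ y, F x y (u x) (u y) ∂μ ∂μ = ∫⁻ x, ∫⁻ y, F x y (v x) (v y) ∂μ ∂μ :=
  lintegral_congr_ae <| huv.mono fun x hx =>
    lintegral_congr_ae <| huv.mono fun y hy => by simp only [hx, hy]

section Telescoping

variable {G : Type*} [AddGroup G] [MeasurableSpace G] [MeasurableAdd G] {μ : Measure G}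
  [μ.IsAddRightInvariant]

theorem lintegral_sq_le_sq_mul_lintegral_sq_sub_add {f : G → ℝ} (hf : Measurable f)
    {Ω : Set G} (hfΩ : ∀ᵐ x ∂μ, x ∉ Ω → f x = 0) {a : G} {N : ℕ}
    (hΩ : ∀ x ∈ Ω, x + N • a ∉ Ω) :
    ∫⁻ x, ENNReal.ofReal (f x ^ 2) ∂μ
      ≤ N ^ 2 * ∫⁻ x, ENNReal.ofReal ((f x - f (x + a)) ^ 2) ∂μ := by
  set D : G → ℝ≥0∞ := fun x => ENNReal.ofReal ((f x - f (x + a)) ^ 2)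
  have hfΩ' : ∀ᵐ x ∂μ, x + N • a ∉ Ω → f (x + N • a) = 0 := by
    rw [ae_iff] at hfΩ ⊢
    exact (measure_preimage_add_right μ (N • a) _).trans hfΩ
  have hpt : ∀ᵐ x ∂μ, ENNReal.ofReal (f x ^ 2) ≤ N * ∑ j ∈ Finset.range N, D (x + j • a) := by
    filter_upwards [hfΩ, hfΩ'] with x hx hxN
    by_cases hxΩ : x ∈ Ω
    · have h := sq_le_mul_sum_sq_sub_of_eq_zero (fun j => f (x + j • a)) (hxN (hΩ x hxΩ))
      simp only [zero_smul, add_zero, succ_nsmul, ← add_assoc] at h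
      rw [← ENNReal.ofReal_natCast, ← ENNReal.ofReal_sum_of_nonneg (fun j _ => sq_nonneg _),
        ← ENNReal.ofReal_mul (Nat.cast_nonneg N)]
      exact ENNReal.ofReal_le_ofReal h
    · simp [hx hxΩ]
  calc ∫⁻ x, ENNReal.ofReal (f x ^ 2) ∂μ
      ≤ ∫⁻ x, N * ∑ j ∈ Finset.range N, D (x + j • a) ∂μ := lintegral_mono_ae hpt
    _ = N * ∑ j ∈ Finset.range N, ∫⁻ x, D (x + j • a) ∂μ := by
      rw [lintegral_const_mul' _ _ (ENNReal.natCast_ne_top N),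
        lintegral_finsetSum' _ fun j _ => by fun_prop]
    _ = N ^ 2 * ∫⁻ x, D x ∂μ := by
      simp only [lintegral_add_right_eq_self D, Finset.sum_const, Finset.card_range,
        nsmul_eq_mul, ← mul_assoc, sq]

end Telescoping

section InnerProductSpace

variable {E : Type*} [NormedAddCommGroup E] [InnerProductSpace ℝ E]

theorem sq_inner_div_norm_le (w h : E) : (⟪w, h⟫ / ‖h‖) ^ 2 ≤ ‖w‖ ^ 2 := by
  rcases eq_or_ne h 0 with rfl | hh
  · simp
  · rw [sq_le_sq, abs_norm, abs_div, abs_norm, div_le_iff₀ (norm_pos_iff.2 hh)]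
    exact abs_real_inner_le_norm w h

variable [MeasurableSpace E] [BorelSpace E] {μ : Measure E}

theorem integrableOn_sq_inner_div_norm {U : Set E} (hU_top : μ U ≠ ⊤) (w : E) :
    IntegrableOn (fun h => (⟪w, h⟫ / ‖h‖) ^ 2) U μ :=
  Measure.integrableOn_of_bounded hU_top (by fun_prop : Measurable _).aestronglyMeasurable
    (ae_of_all _ fun h => (Real.norm_of_nonneg (sq_nonneg _)).trans_le (sq_inner_div_norm_le w h))

variable [μ.IsAddRightInvariant] in
theorem lintegral_sq_inner_div_norm_le {Ω : Set E} {v : E → E} (hv : Measurable v)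
    (hvΩ : ∀ᵐ x ∂μ, x ∉ Ω → v x = 0) {h : E} {N : ℕ} (hΩ : ∀ x ∈ Ω, x - N • h ∉ Ω) :
    ∫⁻ x, ENNReal.ofReal ((⟪v x, h⟫ / ‖h‖) ^ 2) ∂μ
      ≤ N ^ 2 * ∫⁻ x, ENNReal.ofReal ((⟪v x - v (x - h), h⟫ / ‖h‖) ^ 2) ∂μ := by
  have key := lintegral_sq_le_sq_mul_lintegral_sq_sub_add (μ := μ) (f := fun x => ⟪v x, h⟫ / ‖h‖)
    (by fun_prop) (hvΩ.mono fun x hx hxΩ => by simp [hx hxΩ]) (a := -h)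
    (by simpa only [smul_neg, ← sub_eq_add_neg] using hΩ)
  simpa only [← sub_div, ← inner_sub_left, ← sub_eq_add_neg] using key

variable [FiniteDimensional ℝ E] [μ.IsAddHaarMeasure]

theorem setIntegral_sq_inner_div_norm_pos {U : Set E} (hU : 0 < μ U) (hU_top : μ U ≠ ⊤)
    {w : E} (hw : w ≠ 0) : 0 < ∫ h in U, (⟪w, h⟫ / ‖h‖) ^ 2 ∂μ := by
  rw [setIntegral_pos_iff_support_of_nonneg_ae (ae_of_all _ fun h => sq_nonneg _)
    (integrableOn_sq_inner_div_norm hU_top w)]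
  set K : Submodule ℝ E := LinearMap.ker (innerₛₗ ℝ w)
  have hK : K ≠ ⊤ := fun hK => hw (inner_self_eq_zero.mp (hK ▸ Submodule.mem_top : w ∈ K))
  calc 0 < μ U := hU
    _ = μ (U \ K) := (measure_sdiff_null (Measure.addHaar_submodule μ K hK)).symm
    _ ≤ μ (Function.support (fun h => (⟪w, h⟫ / ‖h‖) ^ 2) ∩ U) := by
      refine measure_mono fun h ⟨hhU, hhK⟩ => ⟨?_, hhU⟩
      have hh : h ≠ 0 := by rintro rfl; exact hhK K.zero_mem
      simpa [K, hh] using hhK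

theorem exists_norm_sq_le_mul_setLIntegral_sq_inner_div_norm {U : Set E} (hU : 0 < μ U)
    (hU_top : μ U ≠ ⊤) :
    ∃ C > 0, ∀ w : E, ENNReal.ofReal (‖w‖ ^ 2)
      ≤ ENNReal.ofReal C * ∫⁻ h in U, ENNReal.ofReal ((⟪w, h⟫ / ‖h‖) ^ 2) ∂μ := by
  rcases subsingleton_or_nontrivial E with hE | hE
  · exact ⟨1, one_pos, fun w => by simp [Subsingleton.elim w 0]⟩
  have : IsFiniteMeasure (μ.restrict U) := isFiniteMeasure_restrict.2 hU_top
  set g : E → ℝ := fun w => ∫ h in U, (⟪w, h⟫ / ‖h‖) ^ 2 ∂μ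
  have hg : ContinuousOn g (sphere 0 1) := by
    refine continuousOn_of_dominated (bound := fun _ => 1)
      (fun w _ => (by fun_prop : Measurable _).aestronglyMeasurable)
      (fun w hw => ae_of_all _ fun h => ?_) (integrable_const 1) (ae_of_all _ fun h => by fun_prop)
    rw [Real.norm_of_nonneg (sq_nonneg _)]
    simpa [mem_sphere_zero_iff_norm.1 hw] using sq_inner_div_norm_le w h
  obtain ⟨v, hv, hmin⟩ := (isCompact_sphere (0 : E) 1).exists_isMinOn
    (NormedSpace.sphere_nonempty.2 zero_le_one) hg
  have hgv : 0 < g v :=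
    setIntegral_sq_inner_div_norm_pos hU hU_top (ne_zero_of_mem_unit_sphere ⟨v, hv⟩)
  refine ⟨(g v)⁻¹, inv_pos.2 hgv, fun w => ?_⟩
  rcases eq_or_ne w 0 with rfl | hw
  · simp
  have hw' : ‖w‖ ≠ 0 := norm_ne_zero_iff.2 hw
  have hscale : g w = ‖w‖ ^ 2 * g (‖w‖⁻¹ • w) := by
    simp only [g, ← integral_const_mul, real_inner_smul_left]
    congr 1 with h
    field_simp
  have hgw : ‖w‖ ^ 2 ≤ (g v)⁻¹ * g w := by
    rw [le_inv_mul_iff₀ hgv, hscale, mul_comm]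
    refine mul_le_mul_of_nonneg_left (isMinOn_iff.1 hmin _ (mem_sphere_zero_iff_norm.2 ?_))
      (sq_nonneg _)
    rw [norm_smul, norm_inv, norm_norm, inv_mul_cancel₀ hw']
  rw [← ofReal_integral_eq_lintegral_ofReal (integrableOn_sq_inner_div_norm hU_top w)
    (ae_of_all _ fun h => sq_nonneg _), ← ENNReal.ofReal_mul (inv_nonneg.2 hgv.le)]
  exact ENNReal.ofReal_le_ofReal hgw

theorem exists_lintegral_norm_sq_le_mul_lintegral_setLIntegral {Ω : Set E}
    (hΩ : Bornology.IsBounded Ω) {U : Set E} (hU_meas : MeasurableSet U) (hU : 0 < μ U)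
    (hU_top : μ U ≠ ⊤) {r : ℝ} (hr : 0 < r) (hUr : ∀ h ∈ U, r ≤ ‖h‖) :
    ∃ C > 0, ∀ v : E → E, Measurable v → (∀ᵐ x ∂μ, x ∉ Ω → v x = 0) →
      ∫⁻ x, ENNReal.ofReal (‖v x‖ ^ 2) ∂μ ≤ ENNReal.ofReal C *
        ∫⁻ x, ∫⁻ h in U, ENNReal.ofReal ((⟪v x - v (x - h), h⟫ / ‖h‖) ^ 2) ∂μ ∂μ := by
  obtain ⟨c, hc, hcoer⟩ := exists_norm_sq_le_mul_setLIntegral_sq_inner_div_norm hU hU_top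
  obtain ⟨R, hR⟩ := hΩ.exists_add_notMem
  obtain ⟨N, hN⟩ := exists_nat_gt (R / r)
  refine ⟨c * (N + 1) ^ 2, by positivity, fun v hv hvΩ => ?_⟩
  have hsep : ∀ h ∈ U, ∀ x ∈ Ω, x - (N + 1) • h ∉ Ω := fun h hh => by
    simp only [sub_eq_add_neg]
    refine hR _ ?_
    rw [norm_neg, ← Nat.cast_smul_eq_nsmul ℝ, norm_smul, Real.norm_natCast]
    rw [div_lt_iff₀ hr] at hN
    push_cast
    nlinarith [hUr h hh]
  calc ∫⁻ x, ENNReal.ofReal (‖v x‖ ^ 2) ∂μ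
      ≤ ∫⁻ x, ENNReal.ofReal c * ∫⁻ h in U, ENNReal.ofReal ((⟪v x, h⟫ / ‖h‖) ^ 2) ∂μ ∂μ :=
        lintegral_mono fun x => hcoer (v x)
    _ = ENNReal.ofReal c * ∫⁻ h in U, ∫⁻ x, ENNReal.ofReal ((⟪v x, h⟫ / ‖h‖) ^ 2) ∂μ ∂μ := by
      rw [lintegral_const_mul' _ _ ENNReal.ofReal_ne_top, lintegral_lintegral_swap (by fun_prop)]
    _ ≤ ENNReal.ofReal c * ∫⁻ h in U, (N + 1) ^ 2 *
          ∫⁻ x, ENNReal.ofReal ((⟪v x - v (x - h), h⟫ / ‖h‖) ^ 2) ∂μ ∂μ := by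
      gcongr _ * ?_
      refine setLIntegral_mono' hU_meas fun h hh => ?_
      exact_mod_cast lintegral_sq_inner_div_norm_le hv hvΩ (hsep h hh)
    _ = ENNReal.ofReal (c * (N + 1) ^ 2) *
          ∫⁻ x, ∫⁻ h in U, ENNReal.ofReal ((⟪v x - v (x - h), h⟫ / ‖h‖) ^ 2) ∂μ ∂μ := by
      rw [lintegral_const_mul' _ _ (by simp), lintegral_lintegral_swap (by fun_prop),
        ENNReal.ofReal_mul hc.le, mul_assoc]
      norm_cast

theorem lintegral_setLIntegral_le_lintegral_lintegral_kernel {k : E → ℝ} {U : Set E}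
    (hU : MeasurableSet U) (hkU : ∀ h ∈ U, 1 ≤ k h) (v : E → E) :
    ∫⁻ x, ∫⁻ h in U, ENNReal.ofReal ((⟪v x - v (x - h), h⟫ / ‖h‖) ^ 2) ∂μ ∂μ
      ≤ ∫⁻ x, ∫⁻ y, ENNReal.ofReal (k (x - y) * (⟪v x - v y, x - y⟫ / ‖x - y‖) ^ 2) ∂μ ∂μ := by
  refine lintegral_mono fun x => ?_
  calc ∫⁻ h in U, ENNReal.ofReal ((⟪v x - v (x - h), h⟫ / ‖h‖) ^ 2) ∂μ
      ≤ ∫⁻ h in U, ENNReal.ofReal (k h * (⟪v x - v (x - h), h⟫ / ‖h‖) ^ 2) ∂μ :=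
        setLIntegral_mono' hU fun h hh =>
          ENNReal.ofReal_le_ofReal (le_mul_of_one_le_left (sq_nonneg _) (hkU h hh))
    _ ≤ ∫⁻ h, ENNReal.ofReal (k h * (⟪v x - v (x - h), h⟫ / ‖h‖) ^ 2) ∂μ :=
        setLIntegral_le_lintegral U _
    _ = ∫⁻ y, ENNReal.ofReal (k (x - y) * (⟪v x - v y, x - y⟫ / ‖x - y‖) ^ 2) ∂μ := by
        rw [← lintegral_sub_left_eq_self _ x]
        simp only [sub_sub_cancel]

end InnerProductSpace

theorem stmt19_general (d : ℕ) (s : ℝ) (hs : s ∈ Set.Ioo (0 : ℝ) 1)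
    (Ω : Set (EuclideanSpace ℝ (Fin d)))
    (hΩb : Bornology.IsBounded Ω)
    (Λ : Set (EuclideanSpace ℝ (Fin d))) (hΛopen : IsOpen Λ) (hΛne : Λ.Nonempty)
    (hΛ0 : (0 : EuclideanSpace ℝ (Fin d)) ∉ Λ)
    (hΛscale : ∀ t : ℝ, 0 < t → ∀ h ∈ Λ, t • h ∈ Λ)
    (k : EuclideanSpace ℝ (Fin d) → ℝ)
    (hk : ∀ ξ, k ξ = ‖ξ‖ ^ (-((d : ℝ) + 2 * s)) *
      (Λ ∩ ball 0 1).indicator 1 ξ) :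
    ∃ C_P > (0 : ℝ),
      ∀ u : EuclideanSpace ℝ (Fin d) → EuclideanSpace ℝ (Fin d),
        MemLp u 2 volume →
        (∀ᵐ x : EuclideanSpace ℝ (Fin d), x ∉ Ω → u x = 0) →
        (∫⁻ x, ENNReal.ofReal (‖u x‖ ^ 2))
          ≤ ENNReal.ofReal C_P *
            ∫⁻ x, ∫⁻ y,
              ENNReal.ofReal (k (x - y) * (⟪u x - u y, x - y⟫ / ‖x - y‖) ^ 2) := by
  obtain ⟨e, ε, hε, hεe, hball⟩ :=
    exists_ball_subset_inter_unitBall_of_smul_mem hΛopen hΛne hΛ0 hΛscale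
  have hnorm : ∀ h ∈ ball e ε, ‖e‖ - ε ≤ ‖h‖ := fun h hh => by
    linarith [norm_sub_norm_le e h, mem_ball_iff_norm'.1 hh]
  have hk1 : ∀ h ∈ ball e ε, 1 ≤ k h := fun h hh => by
    rw [hk, Set.indicator_of_mem (hball hh), Pi.one_apply, mul_one]
    refine Real.one_le_rpow_of_pos_of_le_one_of_nonpos (by linarith [hnorm h hh])
      (mem_ball_zero_iff.1 (hball hh).2).le ?_
    linarith [hs.1, (Nat.cast_nonneg d : (0 : ℝ) ≤ d)]
  obtain ⟨C, hC, hPK⟩ := exists_lintegral_norm_sq_le_mul_lintegral_setLIntegral (μ := volume) hΩb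
    measurableSet_ball (measure_ball_pos _ _ hε) measure_ball_lt_top.ne (sub_pos.2 hεe) hnorm
  refine ⟨C, hC, fun u hu hu0 => ?_⟩
  obtain ⟨v, hv, huv⟩ := hu.aestronglyMeasurable
  have hv0 : ∀ᵐ x, x ∉ Ω → v x = 0 := by
    filter_upwards [hu0, huv] with x hx hxv using hxv ▸ hx
  calc (∫⁻ x, ENNReal.ofReal (‖u x‖ ^ 2)) = ∫⁻ x, ENNReal.ofReal (‖v x‖ ^ 2) :=
        lintegral_congr_ae (huv.mono fun x hx => by simp only [hx])
    _ ≤ ENNReal.ofReal C * ∫⁻ x, ∫⁻ y,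
          ENNReal.ofReal (k (x - y) * (⟪v x - v y, x - y⟫ / ‖x - y‖) ^ 2) := by
        refine (hPK v hv.measurable hv0).trans ?_
        gcongr ENNReal.ofReal C * ?_
        exact lintegral_setLIntegral_le_lintegral_lintegral_kernel measurableSet_ball hk1 v
    _ = _ := by
        congr 1
        exact (lintegral_lintegral_congr_ae huv
          (fun x y a b => ENNReal.ofReal (k (x - y) * (⟪a - b, x - y⟫ / ‖x - y‖) ^ 2))).symm

/-- Fractional Poincaré–Korn inequality: for Ω open bounded, s ∈ (0,1) and the
cone-restricted fractional kernel k(ξ) = |ξ|^{−d−2s} 1_{Λ ∩ B₁}(ξ), there is C_P > 0 with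
‖u‖²_{L²} ≤ C_P ∬ k(x−y) |D(u)(x,y)|² dy dx for all u ∈ L² vanishing a.e. outside Ω. -/
theorem stmt19 (d : ℕ) (s : ℝ) (hs : s ∈ Set.Ioo (0 : ℝ) 1)
    (Ω : Set (EuclideanSpace ℝ (Fin d))) (hΩo : IsOpen Ω)
    (hΩb : Bornology.IsBounded Ω)
    (Λ : Set (EuclideanSpace ℝ (Fin d))) (hΛopen : IsOpen Λ) (hΛne : Λ.Nonempty)
    (hΛ0 : (0 : EuclideanSpace ℝ (Fin d)) ∉ Λ)
    (hΛsymm : ∀ h ∈ Λ, -h ∈ Λ)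
    (hΛscale : ∀ t : ℝ, 0 < t → ∀ h ∈ Λ, t • h ∈ Λ)
    (k : EuclideanSpace ℝ (Fin d) → ℝ)
    (hk : ∀ ξ, k ξ = ‖ξ‖ ^ (-((d : ℝ) + 2 * s)) *
      (Λ ∩ ball 0 1).indicator 1 ξ) :
    ∃ C_P > (0 : ℝ),
      ∀ u : EuclideanSpace ℝ (Fin d) → EuclideanSpace ℝ (Fin d),
        MemLp u 2 volume →
        (∀ᵐ x : EuclideanSpace ℝ (Fin d), x ∉ Ω → u x = 0) →
        (∫⁻ x, ENNReal.ofReal (‖u x‖ ^ 2))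
          ≤ ENNReal.ofReal C_P *
            ∫⁻ x, ∫⁻ y,
              ENNReal.ofReal (k (x - y) * (⟪u x - u y, x - y⟫ / ‖x - y‖) ^ 2) :=
  stmt19_general d s hs Ω hΩb Λ hΛopen hΛne hΛ0 hΛscale k hk
end
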